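/- Let (Ω, 𝓕, ℙ) be a probability space, X : Ω → 𝓧 a measurable map into a measurable space, W : Ω → ℝ a random variable taking values in {0,1}, and Y₀, Y₁ : Ω → ℝ integrable random variables. Assume W is independent of the triple (X, Y₀, Y₁) and ℙ(W = 1) = p for some p ∈ (0,1). Define Y^obs = W·Y₁ + (1−W)·Y₀ and, for a constant C ∈ ℝ, Ẑ* = (Y^obs − C)·(W − p) / (p·(1 − p)). Then, almost surely, E[Ẑ* | σ(X)] = E[Y₁ | σ(X)] − E[Y₀ | σ(X)]. -/

import Mathlib

open MeasureTheory ProbabilityTheory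

/-! Since `W ∈ {0, 1}`, the transformed outcome equals `W (Y₁ - C) / p - (1 - W) (Y₀ - C) / (1 - p)`
pointwise. Independence of `W` from `(X, Y)` gives `E[W Y | σ(X)] = E[W] E[Y | σ(X)]`: on a set
`X ⁻¹' t`, the factors `W` and `1_{X ⁻¹' t} Y` are independent. Hence each inverse-propensity
weighted arm is conditionally unbiased for `E[Yᵢ | σ(X)] - C`, and the shifts cancel. -/

theorem shifted_transformed_outcome_eq {w p : ℝ} (hw : w = 0 ∨ w = 1) (hp : p ≠ 0)
    (hp' : 1 - p ≠ 0) (y₀ y₁ c : ℝ) :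
    ((w * y₁ + (1 - w) * y₀) - c) * (w - p) / (p * (1 - p)) =
      w / p * (y₁ - c) - (1 - w) / (1 - p) * (y₀ - c) := by
  rcases hw with rfl | rfl <;> field_simp <;> ring

section

variable {Ω E : Type*} {mΩ : MeasurableSpace Ω} {μ : Measure Ω} {W : Ω → ℝ}
  [NormedAddCommGroup E] [NormedSpace ℝ E]

theorem eq_indicator_of_forall_eq_zero_or_one (hW : ∀ ω, W ω = 0 ∨ W ω = 1) :
    W = {ω | W ω = 1}.indicator 1 := by
  funext ω
  rcases hW ω with h | h <;> simp [h]

theorem integrable_of_forall_eq_zero_or_one [IsFiniteMeasure μ] (hW : Measurable W)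
    (hWbin : ∀ ω, W ω = 0 ∨ W ω = 1) : Integrable W μ := by
  rw [eq_indicator_of_forall_eq_zero_or_one hWbin]
  exact (integrable_const 1).indicator (hW (measurableSet_singleton 1))

theorem integral_eq_of_forall_eq_zero_or_one (hW : Measurable W)
    (hWbin : ∀ ω, W ω = 0 ∨ W ω = 1) {p : ℝ} (hp : 0 ≤ p)
    (hpW : μ {ω | W ω = 1} = ENNReal.ofReal p) : μ[W] = p := by
  conv_lhs => rw [eq_indicator_of_forall_eq_zero_or_one hWbin]
  rw [integral_indicator_one (s := {ω | W ω = 1}) (hW (measurableSet_singleton 1)),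
    measureReal_def, hpW, ENNReal.toReal_ofReal hp]

theorem condExp_sub_const [IsFiniteMeasure μ] [CompleteSpace E] {m : MeasurableSpace Ω} {Y : Ω → E}
    (hm : m ≤ mΩ) (hY : Integrable Y μ) (c : E) :
    μ[fun ω => Y ω - c | m] =ᵐ[μ] fun ω => μ[Y | m] ω - c := by
  filter_upwards [condExp_sub hY (integrable_const c) m] with ω hω
  rwa [condExp_const hm c] at hω

variable {𝓧 : Type*} [m𝓧 : MeasurableSpace 𝓧] [MeasurableSpace E] [BorelSpace E] {X : Ω → 𝓧}
  {Y : Ω → E}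

theorem integrable_div_integral_smul_of_indepFun (hW : Integrable W μ) (hY : Integrable Y μ)
    (hindep : IndepFun W Y μ) : Integrable (fun ω => (W ω / μ[W]) • Y ω) μ :=
  (hindep.comp (measurable_id.div_const _) measurable_id).integrable_smul (hW.div_const _) hY

theorem setIntegral_preimage_smul_of_indepFun (hX : Measurable X) (hW : AEStronglyMeasurable W μ)
    (hY : AEStronglyMeasurable Y μ) (hindep : IndepFun W (fun ω => (X ω, Y ω)) μ)
    {t : Set 𝓧} (ht : MeasurableSet t) :
    ∫ ω in X ⁻¹' t, W ω • Y ω ∂μ = μ[W] • ∫ ω in X ⁻¹' t, Y ω ∂μ := by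
  have hindicator : (X ⁻¹' t).indicator Y =
      fun ω => (t ×ˢ Set.univ).indicator Prod.snd (X ω, Y ω) := by
    ext ω
    by_cases h : X ω ∈ t <;> simp [h]
  have hindep_indicator : IndepFun W ((X ⁻¹' t).indicator Y) μ := by
    rw [hindicator]
    exact hindep.comp measurable_id (measurable_snd.indicator (ht.prod MeasurableSet.univ))
  rw [← integral_indicator (hX ht), ← integral_indicator (hX ht), Set.indicator_smul]
  exact hindep_indicator.integral_fun_smul_eq_smul_integral hW (hY.indicator (hX ht))

theorem condExp_comap_smul_of_indepFun [IsFiniteMeasure μ] [CompleteSpace E] (hX : Measurable X)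
    (hW : Integrable W μ) (hY : Integrable Y μ) (hindep : IndepFun W (fun ω => (X ω, Y ω)) μ) :
    μ[fun ω => W ω • Y ω | m𝓧.comap X] =ᵐ[μ] μ[W] • μ[Y | m𝓧.comap X] := by
  have hWY : IndepFun W Y μ := hindep.comp measurable_id measurable_snd
  refine (ae_eq_condExp_of_forall_setIntegral_eq hX.comap_le (hWY.integrable_smul hW hY)
    (fun s _ _ => (integrable_condExp.smul _).integrableOn) (fun s hs _ => ?_)
    (stronglyMeasurable_condExp.const_smul _).aestronglyMeasurable).symm
  obtain ⟨t, ht, rfl⟩ := hs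
  rw [Pi.smul_def, integral_smul, setIntegral_condExp hX.comap_le hY ⟨t, ht, rfl⟩,
    setIntegral_preimage_smul_of_indepFun hX hW.1 hY.1 hindep ht]

theorem condExp_comap_div_integral_smul_of_indepFun [IsFiniteMeasure μ] [CompleteSpace E]
    (hX : Measurable X) (hW : Integrable W μ) (hY : Integrable Y μ)
    (hindep : IndepFun W (fun ω => (X ω, Y ω)) μ) (hW0 : μ[W] ≠ 0) :
    μ[fun ω => (W ω / μ[W]) • Y ω | m𝓧.comap X] =ᵐ[μ] μ[Y | m𝓧.comap X] := by
  have hint : ∫ ω, W ω / μ[W] ∂μ = 1 := by rw [integral_div, div_self hW0]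
  have hindep' : IndepFun (fun ω => W ω / μ[W]) (fun ω => (X ω, Y ω)) μ :=
    hindep.comp (measurable_id.div_const _) measurable_id
  have := condExp_comap_smul_of_indepFun hX (hW.div_const _) hY hindep'
  rwa [hint, one_smul] at this

end

/-- In a completely randomized experiment with constant propensity
`p = ℙ(W = 1) ∈ (0,1)`, the constant-shifted transformed outcome
`Ẑ* = (Y^obs − C)·(W − p)/(p·(1 − p))` is conditionally unbiased for the CATE. -/
theorem transformed_outcome_shifted_condExp_randomized
    {Ω 𝓧 : Type*} [MeasureSpace Ω] [IsProbabilityMeasure (ℙ : Measure Ω)]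
    [m𝓧 : MeasurableSpace 𝓧]
    (X : Ω → 𝓧) (hX : Measurable X)
    (W Y₀ Y₁ : Ω → ℝ)
    (hW : Measurable W) (hWbin : ∀ ω, W ω = 0 ∨ W ω = 1)
    (hY₀ : Integrable Y₀ ℙ) (hY₁ : Integrable Y₁ ℙ)
    (hindep : IndepFun W (fun ω => (X ω, Y₀ ω, Y₁ ω)) ℙ)
    (p : ℝ) (hp : p ∈ Set.Ioo (0 : ℝ) 1)
    (hpW : ℙ {ω | W ω = 1} = ENNReal.ofReal p)
    (C : ℝ) :
    ℙ[(fun ω => ((W ω * Y₁ ω + (1 - W ω) * Y₀ ω) - C) * (W ω - p) /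
        (p * (1 - p))) | m𝓧.comap X]
      =ᵐ[ℙ] fun ω => (ℙ[Y₁ | m𝓧.comap X]) ω - (ℙ[Y₀ | m𝓧.comap X]) ω := by
  obtain ⟨hp0, hp1⟩ := hp
  have hm : m𝓧.comap X ≤ ‹MeasureSpace Ω›.toMeasurableSpace := hX.comap_le
  have hWint : Integrable W ℙ := integrable_of_forall_eq_zero_or_one hW hWbin
  have h1W : Integrable (fun ω => 1 - W ω) ℙ := (integrable_const 1).sub hWint
  have hEW : ℙ[W] = p := integral_eq_of_forall_eq_zero_or_one hW hWbin hp0.le hpW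
  have hE1W : ℙ[fun ω => 1 - W ω] = 1 - p := by
    rw [integral_sub (integrable_const 1) hWint, hEW, integral_const, probReal_univ, one_smul]
  have hZ : (fun ω => ((W ω * Y₁ ω + (1 - W ω) * Y₀ ω) - C) * (W ω - p) / (p * (1 - p))) =
      fun ω => (W ω / ℙ[W]) • (Y₁ ω - C) - ((1 - W ω) / ℙ[fun ω => 1 - W ω]) • (Y₀ ω - C) := by
    rw [hEW, hE1W]
    exact funext fun ω => shifted_transformed_outcome_eq (hWbin ω) hp0.ne' (by linarith) _ _ _
  rw [hZ]
  have hindep₁ : IndepFun W (fun ω => (X ω, Y₁ ω - C)) ℙ :=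
    hindep.comp measurable_id (measurable_fst.prodMk (measurable_snd.snd.sub_const C))
  have hindep₀ : IndepFun (fun ω => 1 - W ω) (fun ω => (X ω, Y₀ ω - C)) ℙ :=
    hindep.comp (measurable_const.sub measurable_id)
      (measurable_fst.prodMk (measurable_snd.fst.sub_const C))
  have hY₁C : Integrable (fun ω => Y₁ ω - C) ℙ := hY₁.sub (integrable_const C)
  have hY₀C : Integrable (fun ω => Y₀ ω - C) ℙ := hY₀.sub (integrable_const C)
  have treated : ℙ[fun ω => (W ω / ℙ[W]) • (Y₁ ω - C) | m𝓧.comap X]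
      =ᵐ[ℙ] fun ω => ℙ[Y₁ | m𝓧.comap X] ω - C :=
    (condExp_comap_div_integral_smul_of_indepFun hX hWint hY₁C hindep₁ (hEW ▸ hp0.ne')).trans
      (condExp_sub_const hm hY₁ C)
  have control : ℙ[fun ω => ((1 - W ω) / ℙ[fun ω => 1 - W ω]) • (Y₀ ω - C) | m𝓧.comap X]
      =ᵐ[ℙ] fun ω => ℙ[Y₀ | m𝓧.comap X] ω - C :=
    (condExp_comap_div_integral_smul_of_indepFun hX h1W hY₀C hindep₀
      (hE1W ▸ (sub_pos.2 hp1).ne')).trans (condExp_sub_const hm hY₀ C)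
  refine (condExp_sub
    (integrable_div_integral_smul_of_indepFun hWint hY₁C (hindep₁.comp measurable_id measurable_snd))
    (integrable_div_integral_smul_of_indepFun h1W hY₀C (hindep₀.comp measurable_id measurable_snd))
    _).trans ?_
  filter_upwards [treated, control] with ω h₁ h₀
  simp only [Pi.sub_apply, h₁, h₀]
  ring
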